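/- Non-cocompactness of the endpoint Lorentz–Zygmund embedding: define w_k = k^{-1/2} Σ_{j=1}^{k} (2^j)^{1/2} v(r^{2^j}) where v ∈ C_c^∞((e^{-3}, e^{-2})), v ≠ 0, viewed as radial functions on the unit disk. Then ‖∇w_k‖_{L^2} = ‖∇w‖_{L^2} is constant in k (the summands have pairwise disjoint supports), ‖w_k‖_{L^2} ≤ k^{-1/2}‖w‖_{L^2} → 0, yet ∫_B w_k(|x|)^2 / (|x| log(1/|x|))^2 dx = ∫_B w(|x|)^2/(|x| log(1/|x|))^2 dx does not tend to 0. -/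

import Mathlib

open MeasureTheory Set Filter

/-- Solimini-type counterexample profile: `w_k = k^{-1/2} Σ_{j=1}^k h_{2^j} v`, where
`(h_s v)(r) = s^{-1/2} v(r^s)`. -/
noncomputable def wk (v : ℝ → ℝ) (k : ℕ) (r : ℝ) : ℝ :=
  (k : ℝ) ^ (-(1:ℝ)/2) *
    ∑ j ∈ Finset.Icc 1 k, ((2:ℝ) ^ j) ^ (-(1:ℝ)/2) * v (r ^ ((2:ℝ) ^ j))

lemma sq_sum {s : Finset ℕ} (a : ℕ → ℝ) (h : ∀ i ∈ s, ∀ j ∈ s, i ≠ j → a i * a j = 0) :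
    (∑ i ∈ s, a i) ^ 2 = ∑ i ∈ s, (a i) ^ 2 := by
  rw [sq, Finset.sum_mul_sum]
  refine Finset.sum_congr rfl fun i hi => ?_
  rw [Finset.sum_eq_single i (fun j hj hji => h i hi j hj (Ne.symm hji)) (fun hi' => (hi' hi).elim), sq]

lemma cov (s : ℝ) (hs : 2 ≤ s) (g : ℝ → ℝ) (hg : Continuous g) :
    ∫ r in (0:ℝ)..1, g (r ^ s) * (s * r ^ (s - 1)) = ∫ u in (0:ℝ)..1, g u := by
  have h1 : ∀ x ∈ uIcc (0:ℝ) 1, HasDerivAt (fun r : ℝ => r ^ s) (s * x ^ (s - 1)) x := by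
    intro x _
    simpa [mul_comm] using Real.hasDerivAt_rpow_const (p := s) (Or.inr (by linarith))
  have h2 : ContinuousOn (fun x : ℝ => s * x ^ (s - 1)) (uIcc (0:ℝ) 1) := by
    refine (continuous_const.mul ?_).continuousOn
    exact continuous_iff_continuousAt.2 fun x =>
      Real.continuousAt_rpow_const x _ (Or.inr (by linarith))
  have := intervalIntegral.integral_comp_smul_deriv h1 h2 hg
  simp only [smul_eq_mul, Function.comp] at this
  rw [Real.zero_rpow (by linarith), Real.one_rpow] at this
  rw [← this]
  exact intervalIntegral.integral_congr fun r _ => mul_comm _ _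
lemma disj_core {u : ℝ → ℝ} (hu : ∀ x, x ∉ Set.Ioo (Real.exp (-3)) (Real.exp (-2)) → u x = 0)
    {i j : ℕ} (hij : i < j) {r : ℝ} (hr : r ∈ Icc (0:ℝ) 1) :
    u (r ^ ((2:ℝ) ^ i)) * u (r ^ ((2:ℝ) ^ j)) = 0 := by
  by_contra hc
  have hi : r ^ ((2:ℝ) ^ i) ∈ Set.Ioo (Real.exp (-3)) (Real.exp (-2)) := by
    by_contra h; exact hc (by rw [hu _ h, zero_mul])
  have hj : r ^ ((2:ℝ) ^ j) ∈ Set.Ioo (Real.exp (-3)) (Real.exp (-2)) := by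
    by_contra h; exact hc (by rw [hu _ h, mul_zero])
  have hr0 : 0 < r := by
    rcases lt_or_eq_of_le hr.1 with h | h
    · exact h
    · exfalso
      rw [← h, Real.zero_rpow (by positivity)] at hi
      exact absurd hi.1 (not_lt.2 (Real.exp_pos _).le)
  set x := r ^ ((2:ℝ) ^ i) with hx
  have hx0 : 0 < x := Real.rpow_pos_of_pos hr0 _
  have hx1 : x < Real.exp (-2) := hi.2
  have hxle1 : x ≤ 1 := le_of_lt (lt_trans hx1 (Real.exp_lt_one_iff.2 (by norm_num)))
  have key : r ^ ((2:ℝ) ^ j) = x ^ ((2:ℝ) ^ (j - i)) := by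
    rw [hx, ← Real.rpow_mul hr0.le, ← pow_add]
    rw [Nat.add_sub_cancel' hij.le]
  have h2le : (2:ℝ) ≤ (2:ℝ) ^ (j - i) := by
    calc (2:ℝ) = 2 ^ 1 := (pow_one 2).symm
    _ ≤ 2 ^ (j - i) := pow_le_pow_right₀ one_le_two (by omega)
  have hle : x ^ ((2:ℝ) ^ (j - i)) ≤ x ^ (2:ℝ) :=
    Real.rpow_le_rpow_of_exponent_ge hx0 hxle1 h2le
  have hx2 : x ^ (2:ℝ) < Real.exp (-3) := by
    have : x ^ (2:ℝ) < Real.exp (-2) ^ (2:ℝ) :=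
      Real.rpow_lt_rpow hx0.le hx1 (by norm_num)
    rw [← Real.exp_mul] at this
    calc x ^ (2:ℝ) < Real.exp ((-2) * 2) := this
    _ < Real.exp (-3) := Real.exp_lt_exp.2 (by norm_num)
  have := hj.1
  rw [key] at this
  linarith [lt_of_le_of_lt hle hx2]

lemma sq_rpow_neg_half (x : ℝ) (hx : 0 ≤ x) : (x ^ (-(1:ℝ)/2)) ^ 2 = x⁻¹ := by
  rcases eq_or_lt_of_le hx with h | h
  · rw [← h, Real.zero_rpow (by norm_num)]; norm_num
  · rw [sq, ← Real.rpow_add h]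
    norm_num
    exact Real.rpow_neg_one x

lemma cont_rpow (s : ℝ) (hs : 0 < s) : Continuous fun r : ℝ => r ^ s :=
  continuous_iff_continuousAt.2 fun x => Real.continuousAt_rpow_const x s (Or.inr hs.le)

lemma main_red (k : ℕ) (hk : 1 ≤ k) (F g : ℝ → ℝ) (hg : Continuous g)
    (hF : ∀ r ∈ Icc (0:ℝ) 1, F r = ((k:ℝ) ^ (-(1:ℝ)/2)) ^ 2 *
      ∑ j ∈ Finset.Icc 1 k, g (r ^ ((2:ℝ) ^ j)) * (((2:ℝ) ^ j) * r ^ ((2:ℝ) ^ j - 1))) :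
    ∫ r in (0:ℝ)..1, F r = ∫ u in (0:ℝ)..1, g u := by
  have h2j : ∀ j : ℕ, 1 ≤ j → (2:ℝ) ≤ 2 ^ j := fun j hj => by
    calc (2:ℝ) = 2 ^ 1 := (pow_one 2).symm
    _ ≤ 2 ^ j := pow_le_pow_right₀ one_le_two hj
  have hcongr : ∫ r in (0:ℝ)..1, F r = ∫ r in (0:ℝ)..1, ((k:ℝ) ^ (-(1:ℝ)/2)) ^ 2 *
      ∑ j ∈ Finset.Icc 1 k, g (r ^ ((2:ℝ) ^ j)) * (((2:ℝ) ^ j) * r ^ ((2:ℝ) ^ j - 1)) :=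
    intervalIntegral.integral_congr fun r hr => hF r (by rwa [uIcc_of_le zero_le_one] at hr)
  rw [hcongr, intervalIntegral.integral_const_mul, intervalIntegral.integral_finset_sum]
  · have heach : ∀ j ∈ Finset.Icc 1 k,
        (∫ r in (0:ℝ)..1, g (r ^ ((2:ℝ) ^ j)) * (((2:ℝ) ^ j) * r ^ ((2:ℝ) ^ j - 1)))
          = ∫ u in (0:ℝ)..1, g u := fun j hj =>
      cov ((2:ℝ) ^ j) (h2j j (Finset.mem_Icc.1 hj).1) g hg
    rw [Finset.sum_congr rfl heach, Finset.sum_const, Nat.card_Icc]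
    rw [sq_rpow_neg_half _ (Nat.cast_nonneg k), nsmul_eq_mul]
    have hk0 : (k:ℝ) ≠ 0 := Nat.cast_ne_zero.2 (by omega)
    rw [show k + 1 - 1 = k from rfl]
    field_simp
  · intro j hj
    have h2 : (2:ℝ) ≤ 2 ^ j := h2j j (Finset.mem_Icc.1 hj).1
    exact ((hg.comp (cont_rpow _ (by linarith))).mul
      (continuous_const.mul (cont_rpow _ (by linarith)))).intervalIntegrable _ _

lemma pt3 (s : ℝ) (hs : 2 ≤ s) (v : ℝ → ℝ) {r : ℝ} (hr : r ∈ Icc (0:ℝ) 1) :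
    (s ^ (-(1:ℝ)/2) * v (r ^ s)) ^ 2 / (r * Real.log (1/r) ^ 2)
      = (v (r ^ s) ^ 2 / (r ^ s * Real.log (1/(r ^ s)) ^ 2)) * (s * r ^ (s - 1)) := by
  have hs0 : (0:ℝ) < s := by linarith
  rcases eq_or_lt_of_le hr.1 with h0 | h0
  · rw [← h0]
    rw [Real.zero_rpow (by linarith : s - 1 ≠ 0)]
    simp
  rcases eq_or_lt_of_le hr.2 with h1 | h1
  · rw [h1]
    simp [Real.one_rpow]
  · have hrs : (0:ℝ) < r ^ s := Real.rpow_pos_of_pos h0 _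
    have hlogr : Real.log r ≠ 0 := (Real.log_neg h0 h1).ne
    rw [one_div, one_div, Real.log_inv, Real.log_inv, Real.log_rpow h0,
      mul_pow, sq_rpow_neg_half s hs0.le, Real.rpow_sub h0, Real.rpow_one]
    field_simp

lemma pt1 (s : ℝ) (hs : 2 ≤ s) (w : ℝ → ℝ) {r : ℝ} (hr : r ∈ Icc (0:ℝ) 1) :
    (s ^ (-(1:ℝ)/2) * (w (r ^ s) * (s * r ^ (s - 1)))) ^ 2 * r
      = (w (r ^ s) ^ 2 * r ^ s) * (s * r ^ (s - 1)) := by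
  have hs0 : (0:ℝ) < s := by linarith
  rcases eq_or_lt_of_le hr.1 with h0 | h0
  · rw [← h0]
    rw [Real.zero_rpow (by linarith : s - 1 ≠ 0), Real.zero_rpow hs0.ne']
    ring
  · rw [mul_pow, mul_pow, mul_pow, sq_rpow_neg_half s hs0.le,
      Real.rpow_sub h0, Real.rpow_one]
    field_simp

lemma hasDerivAt_wk (v : ℝ → ℝ) (hv : ContDiff ℝ (⊤ : ℕ∞) v) (k : ℕ) (r : ℝ) :
    HasDerivAt (wk v k) ((k:ℝ) ^ (-(1:ℝ)/2) *
      ∑ j ∈ Finset.Icc 1 k, ((2:ℝ) ^ j) ^ (-(1:ℝ)/2) *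
        (deriv v (r ^ ((2:ℝ) ^ j)) * (((2:ℝ) ^ j) * r ^ ((2:ℝ) ^ j - 1)))) r := by
  have hsum : HasDerivAt (fun r : ℝ => ∑ j ∈ Finset.Icc 1 k,
      ((2:ℝ) ^ j) ^ (-(1:ℝ)/2) * v (r ^ ((2:ℝ) ^ j)))
      (∑ j ∈ Finset.Icc 1 k, ((2:ℝ) ^ j) ^ (-(1:ℝ)/2) *
        (deriv v (r ^ ((2:ℝ) ^ j)) * (((2:ℝ) ^ j) * r ^ ((2:ℝ) ^ j - 1)))) r := by
    refine HasDerivAt.fun_sum fun j _ => ?_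
    have h1 : (1:ℝ) ≤ 2 ^ j := one_le_pow₀ one_le_two
    have hpow : HasDerivAt (fun r : ℝ => r ^ ((2:ℝ) ^ j))
        (((2:ℝ) ^ j) * r ^ ((2:ℝ) ^ j - 1)) r := by
      simpa using Real.hasDerivAt_rpow_const (p := (2:ℝ) ^ j) (Or.inr h1)
    have hcomp : HasDerivAt (fun r : ℝ => v (r ^ ((2:ℝ) ^ j)))
        (deriv v (r ^ ((2:ℝ) ^ j)) * (((2:ℝ) ^ j) * r ^ ((2:ℝ) ^ j - 1))) r :=
      ((hv.differentiable (by simp) _).hasDerivAt).comp r hpow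
    exact hcomp.const_mul _
  exact hsum.const_mul _

lemma deriv_wk (v : ℝ → ℝ) (hv : ContDiff ℝ (⊤ : ℕ∞) v) (k : ℕ) (r : ℝ) :
    deriv (wk v k) r = (k:ℝ) ^ (-(1:ℝ)/2) *
      ∑ j ∈ Finset.Icc 1 k, ((2:ℝ) ^ j) ^ (-(1:ℝ)/2) *
        (deriv v (r ^ ((2:ℝ) ^ j)) * (((2:ℝ) ^ j) * r ^ ((2:ℝ) ^ j - 1))) :=
  (hasDerivAt_wk v hv k r).deriv

lemma geom_le_one (k : ℕ) : ∑ j ∈ Finset.Icc 1 k, ((2:ℝ) ^ j)⁻¹ ≤ 1 := by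
  have : ∀ j : ℕ, ((2:ℝ) ^ j)⁻¹ = (1/2 : ℝ) ^ j := fun j => by
    rw [one_div, inv_pow]
  simp only [this]
  have h1 : Finset.Icc 1 k = Finset.Ico 1 (k + 1) := by
    rw [Finset.Ico_add_one_right_eq_Icc]
  rw [h1, Finset.sum_Ico_eq_sum_range]
  have : ∀ i : ℕ, (1/2 : ℝ) ^ (1 + i) = (1/2) * (1/2) ^ i := fun i => by rw [pow_add, pow_one]
  simp only [this, ← Finset.mul_sum]
  calc (1/2 : ℝ) * ∑ i ∈ Finset.range (k + 1 - 1), (1/2:ℝ) ^ i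
      ≤ (1/2) * 2 := by
        have := sum_geometric_two_le (k + 1 - 1)
        linarith
    _ = 1 := by norm_num

lemma cont_wk (v : ℝ → ℝ) (hv : Continuous v) (k : ℕ) : Continuous (wk v k) := by
  unfold wk
  exact continuous_const.mul (continuous_finset_sum _ fun j _ =>
    continuous_const.mul (hv.comp (cont_rpow _ (by positivity))))

lemma disj {u : ℝ → ℝ} (hu : ∀ x, x ∉ Set.Ioo (Real.exp (-3)) (Real.exp (-2)) → u x = 0)
    {i j : ℕ} (hij : i ≠ j) {r : ℝ} (hr : r ∈ Icc (0:ℝ) 1) :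
    u (r ^ ((2:ℝ) ^ i)) * u (r ^ ((2:ℝ) ^ j)) = 0 := by
  rcases hij.lt_or_gt with h | h
  · exact disj_core hu h hr
  · rw [mul_comm]; exact disj_core hu h hr

/-- Non-cocompactness of the endpoint Lorentz–Zygmund embedding: for nonzero
`v ∈ C_c^∞((e^{-3}, e^{-2}))` (radial profiles on the unit disk), the sequence
`w_k = k^{-1/2} Σ_{j=1}^k h_{2^j} v` has constant Dirichlet energy (the summands have
pairwise disjoint supports), vanishing `L²` norm, yet its weighted integral
`∫_B w_k²/(|x| log(1/|x|))² dx` is constant, equal to that of `v`, hence does not tend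
to `0`. -/
theorem endpoint_not_cocompact
    (v : ℝ → ℝ) (hv : ContDiff ℝ (⊤ : ℕ∞) v)
    (hsupp : tsupport v ⊆ Set.Ioo (Real.exp (-3)) (Real.exp (-2)))
    (hne : v ≠ 0) :
    (∀ k : ℕ, 1 ≤ k →
      (∫ r in (0:ℝ)..1, (deriv (wk v k) r) ^ 2 * r)
        = ∫ r in (0:ℝ)..1, (deriv v r) ^ 2 * r) ∧
    Tendsto (fun k => ∫ r in (0:ℝ)..1, (wk v k r) ^ 2 * r) atTop (nhds 0) ∧
    (∀ k : ℕ, 1 ≤ k →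
      (∫ r in (0:ℝ)..1, (wk v k r) ^ 2 / (r * Real.log (1/r) ^ 2))
        = ∫ r in (0:ℝ)..1, (v r) ^ 2 / (r * Real.log (1/r) ^ 2)) := by
  have hv0 : ∀ x, x ∉ Set.Ioo (Real.exp (-3)) (Real.exp (-2)) → v x = 0 := fun x hx =>
    image_eq_zero_of_notMem_tsupport fun h => hx (hsupp h)
  have hv'0 : ∀ x, x ∉ Set.Ioo (Real.exp (-3)) (Real.exp (-2)) → deriv v x = 0 := by
    intro x hx
    by_contra hne'
    exact hx (hsupp (support_deriv_subset hne'))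
  have h2j : ∀ j : ℕ, 1 ≤ j → (2:ℝ) ≤ 2 ^ j := fun j hj => by
    calc (2:ℝ) = 2 ^ 1 := (pow_one 2).symm
    _ ≤ 2 ^ j := pow_le_pow_right₀ one_le_two hj
  refine ⟨?_, ?_, ?_⟩
  · -- Part 1: Dirichlet energy
    intro k hk
    refine main_red k hk _ (fun u => (deriv v u) ^ 2 * u)
      (((hv.continuous_deriv (by simp)).pow 2).mul continuous_id) ?_
    intro r hr
    rw [deriv_wk v hv k, mul_pow]
    rw [sq_sum _ (fun i hi j hj hij => ?_), mul_assoc, Finset.sum_mul]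
    · refine congrArg _ (Finset.sum_congr rfl fun j hj => ?_)
      exact pt1 _ (h2j j (Finset.mem_Icc.1 hj).1) (deriv v) hr
    · have h0 := disj hv'0 hij hr
      calc ((2:ℝ) ^ i) ^ (-(1:ℝ)/2) *
            (deriv v (r ^ ((2:ℝ) ^ i)) * (((2:ℝ) ^ i) * r ^ ((2:ℝ) ^ i - 1))) *
            (((2:ℝ) ^ j) ^ (-(1:ℝ)/2) *
            (deriv v (r ^ ((2:ℝ) ^ j)) * (((2:ℝ) ^ j) * r ^ ((2:ℝ) ^ j - 1))))
          = ((2:ℝ) ^ i) ^ (-(1:ℝ)/2) * (((2:ℝ) ^ i) * r ^ ((2:ℝ) ^ i - 1)) *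
            (((2:ℝ) ^ j) ^ (-(1:ℝ)/2) * (((2:ℝ) ^ j) * r ^ ((2:ℝ) ^ j - 1))) *
            (deriv v (r ^ ((2:ℝ) ^ i)) * deriv v (r ^ ((2:ℝ) ^ j))) := by ring
        _ = 0 := by rw [h0, mul_zero]
  · -- Part 2: L² norm vanishes
    have hcs : HasCompactSupport v :=
      IsCompact.of_isClosed_subset isCompact_Icc (isClosed_tsupport v)
        (hsupp.trans Set.Ioo_subset_Icc_self)
    obtain ⟨M, hM⟩ := hcs.exists_bound_of_continuous hv.continuous
    have hM0 : 0 ≤ M := le_trans (norm_nonneg _) (hM 0)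
    have hub : ∀ k : ℕ, (∫ r in (0:ℝ)..1, (wk v k r) ^ 2 * r) ≤ M ^ 2 * (k:ℝ)⁻¹ := by
      intro k
      have hpt : ∀ r ∈ Icc (0:ℝ) 1, (wk v k r) ^ 2 * r ≤ M ^ 2 * (k:ℝ)⁻¹ := by
        intro r hr
        have hd : (∑ j ∈ Finset.Icc 1 k, ((2:ℝ) ^ j) ^ (-(1:ℝ)/2) * v (r ^ ((2:ℝ) ^ j))) ^ 2
            = ∑ j ∈ Finset.Icc 1 k, (((2:ℝ) ^ j) ^ (-(1:ℝ)/2) * v (r ^ ((2:ℝ) ^ j))) ^ 2 := by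
          refine sq_sum _ fun i hi j hj hij => ?_
          have h0 := disj hv0 hij hr
          calc ((2:ℝ) ^ i) ^ (-(1:ℝ)/2) * v (r ^ ((2:ℝ) ^ i)) *
                (((2:ℝ) ^ j) ^ (-(1:ℝ)/2) * v (r ^ ((2:ℝ) ^ j)))
              = ((2:ℝ) ^ i) ^ (-(1:ℝ)/2) * ((2:ℝ) ^ j) ^ (-(1:ℝ)/2) *
                (v (r ^ ((2:ℝ) ^ i)) * v (r ^ ((2:ℝ) ^ j))) := by ring
            _ = 0 := by rw [h0, mul_zero]
        have hterm : ∀ j ∈ Finset.Icc 1 k,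
            (((2:ℝ) ^ j) ^ (-(1:ℝ)/2) * v (r ^ ((2:ℝ) ^ j))) ^ 2 ≤ ((2:ℝ) ^ j)⁻¹ * M ^ 2 := by
          intro j _
          rw [mul_pow, sq_rpow_neg_half _ (by positivity)]
          have h1 : |v (r ^ ((2:ℝ) ^ j))| ≤ M := by
            simpa [Real.norm_eq_abs] using hM (r ^ ((2:ℝ) ^ j))
          have h2 : v (r ^ ((2:ℝ) ^ j)) ^ 2 ≤ M ^ 2 := sq_le_sq' (neg_le_of_abs_le h1) (le_of_abs_le h1)
          exact mul_le_mul_of_nonneg_left h2 (by positivity)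
        have hsumle : ∑ j ∈ Finset.Icc 1 k, (((2:ℝ) ^ j) ^ (-(1:ℝ)/2) * v (r ^ ((2:ℝ) ^ j))) ^ 2
            ≤ M ^ 2 := by
          calc _ ≤ ∑ j ∈ Finset.Icc 1 k, ((2:ℝ) ^ j)⁻¹ * M ^ 2 := Finset.sum_le_sum hterm
            _ = (∑ j ∈ Finset.Icc 1 k, ((2:ℝ) ^ j)⁻¹) * M ^ 2 := by rw [Finset.sum_mul]
            _ ≤ 1 * M ^ 2 := mul_le_mul_of_nonneg_right (geom_le_one k) (by positivity)
            _ = M ^ 2 := one_mul _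
        have hsumnn : 0 ≤ ∑ j ∈ Finset.Icc 1 k, (((2:ℝ) ^ j) ^ (-(1:ℝ)/2) * v (r ^ ((2:ℝ) ^ j))) ^ 2 :=
          Finset.sum_nonneg fun j _ => sq_nonneg _
        calc (wk v k r) ^ 2 * r
            = ((k:ℝ) ^ (-(1:ℝ)/2)) ^ 2 *
              (∑ j ∈ Finset.Icc 1 k, ((2:ℝ) ^ j) ^ (-(1:ℝ)/2) * v (r ^ ((2:ℝ) ^ j))) ^ 2 * r := by
              rw [wk, mul_pow]
          _ ≤ ((k:ℝ) ^ (-(1:ℝ)/2)) ^ 2 *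
              (∑ j ∈ Finset.Icc 1 k, ((2:ℝ) ^ j) ^ (-(1:ℝ)/2) * v (r ^ ((2:ℝ) ^ j))) ^ 2 * 1 := by
              have := mul_nonneg (sq_nonneg ((k:ℝ) ^ (-(1:ℝ)/2))) (sq_nonneg
                (∑ j ∈ Finset.Icc 1 k, ((2:ℝ) ^ j) ^ (-(1:ℝ)/2) * v (r ^ ((2:ℝ) ^ j))))
              exact mul_le_mul_of_nonneg_left hr.2 this
          _ = (k:ℝ)⁻¹ *
              (∑ j ∈ Finset.Icc 1 k, (((2:ℝ) ^ j) ^ (-(1:ℝ)/2) * v (r ^ ((2:ℝ) ^ j))) ^ 2) := by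
              rw [mul_one, sq_rpow_neg_half _ (Nat.cast_nonneg k), hd]
          _ ≤ (k:ℝ)⁻¹ * M ^ 2 := mul_le_mul_of_nonneg_left hsumle (by positivity)
          _ = M ^ 2 * (k:ℝ)⁻¹ := mul_comm _ _
      calc (∫ r in (0:ℝ)..1, (wk v k r) ^ 2 * r)
          ≤ ∫ _ in (0:ℝ)..1, M ^ 2 * (k:ℝ)⁻¹ := by
            refine intervalIntegral.integral_mono_on zero_le_one ?_ intervalIntegrable_const hpt
            exact (((cont_wk v hv.continuous k).pow 2).mul continuous_id).intervalIntegrable _ _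
        _ = M ^ 2 * (k:ℝ)⁻¹ := by simp
    have hlb : ∀ k : ℕ, 0 ≤ ∫ r in (0:ℝ)..1, (wk v k r) ^ 2 * r := fun k =>
      intervalIntegral.integral_nonneg zero_le_one fun r hr => mul_nonneg (sq_nonneg _) hr.1
    have hlim : Tendsto (fun k : ℕ => M ^ 2 * (k:ℝ)⁻¹) atTop (nhds 0) := by
      simpa using (tendsto_inv_atTop_nhds_zero_nat (𝕜 := ℝ)).const_mul (M ^ 2)
    exact tendsto_of_tendsto_of_tendsto_of_le_of_le tendsto_const_nhds hlim hlb hub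
  · -- Part 3: weighted integral constant
    intro k hk
    have hg : Continuous fun u : ℝ => v u ^ 2 / (u * Real.log (1/u) ^ 2) := by
      have hrw : (fun u : ℝ => v u ^ 2 / (u * Real.log (1/u) ^ 2))
          = fun u : ℝ => v u ^ 2 / (u * Real.log u ^ 2) := by
        funext u
        rw [one_div, Real.log_inv]; ring_nf
      rw [hrw]
      refine continuous_iff_continuousAt.2 fun x => ?_
      by_cases hx : x ∈ Set.Ioo (0:ℝ) 1
      · refine ContinuousAt.div ((hv.continuous.pow 2).continuousAt) ?_ ?_
        · exact continuousAt_id.mul (((Real.continuousAt_log hx.1.ne').pow 2))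
        · have hlog : Real.log x ≠ 0 := (Real.log_neg hx.1 hx.2).ne
          exact mul_ne_zero hx.1.ne' (pow_ne_zero _ hlog)
      · have hx' : x ∉ tsupport v := by
          intro hmem
          have := hsupp hmem
          refine hx ⟨lt_trans (Real.exp_pos _) this.1, lt_trans this.2 ?_⟩
          rw [show (1:ℝ) = Real.exp 0 from (Real.exp_zero).symm]
          exact Real.exp_lt_exp.2 (by norm_num)
        have hev : (fun u : ℝ => v u ^ 2 / (u * Real.log u ^ 2)) =ᶠ[nhds x] fun _ => (0:ℝ) := by
          filter_upwards [(isClosed_tsupport v).isOpen_compl.mem_nhds hx'] with u hu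
          rw [image_eq_zero_of_notMem_tsupport hu]
          simp
        exact hev.continuousAt
    refine main_red k hk _ (fun u => v u ^ 2 / (u * Real.log (1/u) ^ 2)) hg ?_
    intro r hr
    rw [wk, mul_pow, sq_sum _ (fun i hi j hj hij => ?_), mul_div_assoc, Finset.sum_div]
    · refine congrArg _ (Finset.sum_congr rfl fun j hj => ?_)
      exact pt3 _ (h2j j (Finset.mem_Icc.1 hj).1) v hr
    · have h0 := disj hv0 hij hr
      calc ((2:ℝ) ^ i) ^ (-(1:ℝ)/2) * v (r ^ ((2:ℝ) ^ i)) *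
            (((2:ℝ) ^ j) ^ (-(1:ℝ)/2) * v (r ^ ((2:ℝ) ^ j)))
          = ((2:ℝ) ^ i) ^ (-(1:ℝ)/2) * ((2:ℝ) ^ j) ^ (-(1:ℝ)/2) *
            (v (r ^ ((2:ℝ) ^ i)) * v (r ^ ((2:ℝ) ^ j))) := by ring
        _ = 0 := by rw [h0, mul_zero]
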